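/- Let X be a real Banach space, T > 0, f : [0,T] × X × X → X continuous, and φ : X → X a homeomorphism with φ(0) = 0 whose inverse φ⁻¹ is Lipschitz with constant k. Suppose ‖f(t,x,y)‖ ≤ c₀ + c₁‖y‖ for all (t,x,y) with constants c₀, c₁ ≥ 0. If u : [0,T] → X is C¹ with u'(0) = 0 and φ(u'(t)) = ∫₀ᵗ f(s, u(s), u'(s)) ds for all t ∈ [0,T], then ‖u'(t)‖ ≤ k c₀ T e^{k c₁ T} for all t ∈ [0,T]. -/

import Mathlib

/-!
Since `ψ = φ⁻¹` is `k`-Lipschitz and vanishes at `0`, `‖u' t‖ ≤ k ‖φ (u' t)‖`; bounding the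
integral by the growth condition on `f` gives the Volterra inequality
`‖u' t‖ ≤ k c₀ T + k c₁ ∫₀ᵗ ‖u' s‖ ds`, and the integral form of Grönwall's inequality,
obtained from Mathlib's differential form applied to the primitive of `‖u'‖`, finishes.
-/

open Set Real intervalIntegral

theorem norm_le_mul_norm_of_leftInverse {X Y : Type*} [NormedAddCommGroup X] [NormedAddCommGroup Y]
    {φ : X → Y} {ψ : Y → X} {k : ℝ} (hleft : Function.LeftInverse ψ φ) (hφ0 : φ 0 = 0)
    (hLip : ∀ a b, ‖ψ a - ψ b‖ ≤ k * ‖a - b‖) (x : X) : ‖x‖ ≤ k * ‖φ x‖ := by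
  have hψ0 : ψ 0 = 0 := hφ0 ▸ hleft 0
  simpa [hleft x, hψ0] using hLip (φ x) 0

theorem mul_gronwallBound_zero_add (K ε x : ℝ) :
    K * gronwallBound 0 K ε x + ε = ε * exp (K * x) := by
  rcases eq_or_ne K 0 with rfl | hK
  · simp [gronwallBound_K0]
  · rw [gronwallBound_of_K_ne_0 hK]
    field_simp
    ring

theorem le_mul_exp_of_le_add_mul_integral {w : ℝ → ℝ} {a b K ε : ℝ} (hK : 0 ≤ K)
    (hw : ContinuousOn w (Icc a b)) (h : ∀ t ∈ Icc a b, w t ≤ ε + K * ∫ s in a..t, w s) :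
    ∀ t ∈ Icc a b, w t ≤ ε * exp (K * (t - a)) := by
  intro t ht
  have hab : a ≤ b := ht.1.trans ht.2
  -- Extending `w` continuously off `[a, b]` makes its primitive differentiable everywhere.
  set W := IccExtend hab ((Icc a b).domRestrict w)
  have hW : Continuous W := continuous_IccExtend_iff.2 hw.domRestrict
  have hWw : EqOn W w (Icc a b) := fun s hs => IccExtend_of_mem hab _ hs
  have hintW : ∀ t ∈ Icc a b, ∫ s in a..t, W s = ∫ s in a..t, w s := fun t ht =>
    integral_congr fun s hs => hWw (uIcc_subset_Icc (left_mem_Icc.2 hab) ht hs)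
  have hFTC x : HasDerivAt (fun t => ∫ s in a..t, W s) (W x) x :=
    (hW.integral_hasStrictDerivAt a x).hasDerivAt
  have hgronwall := le_gronwallBound_of_liminf_deriv_right_le (b := b) (δ := 0) (K := K) (ε := ε)
    (fun x _ => (hFTC x).continuousAt.continuousWithinAt)
    (fun x _ _ hr => (hFTC x).hasDerivWithinAt.liminf_right_slope_le hr) integral_same.le
    (fun x hx => by
      have hx' : x ∈ Icc a b := Ico_subset_Icc_self hx
      rw [hWw hx', hintW x hx', add_comm]
      exact h x hx')
  calc w t ≤ ε + K * ∫ s in a..t, W s := hintW t ht ▸ h t ht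
    _ ≤ ε + K * gronwallBound 0 K ε (t - a) := by gcongr; exact hgronwall t ht
    _ = ε * exp (K * (t - a)) := by rw [add_comm, mul_gronwallBound_zero_add]

theorem norm_integral_le_mul_add_mul_integral {E : Type*} [NormedAddCommGroup E]
    [NormedSpace ℝ E] {F : ℝ → E} {w : ℝ → ℝ} {a b c₀ c₁ : ℝ} (hab : a ≤ b)
    (hw : IntervalIntegrable w MeasureTheory.volume a b)
    (hF : ∀ s ∈ Ioc a b, ‖F s‖ ≤ c₀ + c₁ * w s) :
    ‖∫ s in a..b, F s‖ ≤ c₀ * (b - a) + c₁ * ∫ s in a..b, w s := by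
  calc ‖∫ s in a..b, F s‖ ≤ ∫ s in a..b, (c₀ + c₁ * w s) :=
        norm_integral_le_of_norm_le hab (.of_forall hF)
          (intervalIntegrable_const.add (hw.const_mul c₁))
    _ = c₀ * (b - a) + c₁ * ∫ s in a..b, w s := by
        rw [integral_add intervalIntegrable_const (hw.const_mul c₁), integral_const,
          integral_const_mul, smul_eq_mul, mul_comm]

theorem apriori_deriv_bound_general {X : Type*} [NormedAddCommGroup X] [NormedSpace ℝ X]
    (T k c₀ c₁ : ℝ) (hk : 0 ≤ k) (hc₀ : 0 ≤ c₀) (hc₁ : 0 ≤ c₁)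
    (f : ℝ → X → X → X)
    (φ ψ : X → X)
    (hleft : Function.LeftInverse ψ φ)
    (hφ0 : φ 0 = 0)
    (hLip : ∀ a b, ‖ψ a - ψ b‖ ≤ k * ‖a - b‖)
    (hbound : ∀ t x y, ‖f t x y‖ ≤ c₀ + c₁ * ‖y‖)
    (u u' : ℝ → X)
    (hcont : ContinuousOn u' (Set.Icc (0 : ℝ) T))
    (heq : ∀ t ∈ Set.Icc (0 : ℝ) T, φ (u' t) = ∫ s in (0 : ℝ)..t, f s (u s) (u' s)) :
    ∀ t ∈ Set.Icc (0 : ℝ) T, ‖u' t‖ ≤ k * c₀ * T * Real.exp (k * c₁ * T) := by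
  have hnorm : ContinuousOn (fun s => ‖u' s‖) (Icc 0 T) := hcont.norm
  have hvolterra : ∀ t ∈ Icc 0 T, ‖u' t‖ ≤ k * c₀ * T + k * c₁ * ∫ s in (0 : ℝ)..t, ‖u' s‖ := by
    intro t ht
    have hint := norm_integral_le_mul_add_mul_integral (F := fun s => f s (u s) (u' s)) ht.1
      ((hnorm.mono (uIcc_subset_Icc (left_mem_Icc.2 (ht.1.trans ht.2)) ht)).intervalIntegrable)
      (fun s _ => hbound _ _ _)
    calc ‖u' t‖ ≤ k * ‖φ (u' t)‖ := norm_le_mul_norm_of_leftInverse hleft hφ0 hLip _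
      _ ≤ k * (c₀ * T + c₁ * ∫ s in (0 : ℝ)..t, ‖u' s‖) := by
          rw [heq t ht]
          gcongr
          exact hint.trans (by gcongr; linarith [ht.2])
      _ = _ := by ring
  intro t ht
  calc ‖u' t‖ ≤ k * c₀ * T * exp (k * c₁ * (t - 0)) :=
        le_mul_exp_of_le_add_mul_integral (by positivity) hnorm hvolterra t ht
    _ ≤ k * c₀ * T * exp (k * c₁ * T) := by
        have hT : 0 ≤ T := ht.1.trans ht.2
        gcongr
        linarith [ht.2]

theorem apriori_deriv_bound {X : Type*} [NormedAddCommGroup X] [NormedSpace ℝ X]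
    [CompleteSpace X]
    (T k c₀ c₁ : ℝ) (hT : 0 < T) (hk : 0 ≤ k) (hc₀ : 0 ≤ c₀) (hc₁ : 0 ≤ c₁)
    (f : ℝ → X → X → X) (hf : Continuous fun p : ℝ × X × X => f p.1 p.2.1 p.2.2)
    (φ ψ : X → X) (hφcont : Continuous φ)
    (hleft : Function.LeftInverse ψ φ) (hright : Function.RightInverse ψ φ)
    (hφ0 : φ 0 = 0)
    (hLip : ∀ a b, ‖ψ a - ψ b‖ ≤ k * ‖a - b‖)
    (hbound : ∀ t x y, ‖f t x y‖ ≤ c₀ + c₁ * ‖y‖)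
    (u u' : ℝ → X)
    (hderiv : ∀ t ∈ Set.Icc (0 : ℝ) T, HasDerivAt u (u' t) t)
    (hcont : ContinuousOn u' (Set.Icc (0 : ℝ) T))
    (hu'0 : u' 0 = 0)
    (heq : ∀ t ∈ Set.Icc (0 : ℝ) T, φ (u' t) = ∫ s in (0 : ℝ)..t, f s (u s) (u' s)) :
    ∀ t ∈ Set.Icc (0 : ℝ) T, ‖u' t‖ ≤ k * c₀ * T * Real.exp (k * c₁ * T) :=
  apriori_deriv_bound_general T k c₀ c₁ hk hc₀ hc₁ f φ ψ hleft hφ0 hLip hbound u u' hcont heq
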